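/- Let n, m be natural numbers and work in Euclidean space ℝⁿ with its standard inner product ⟨·,·⟩ and norm. Let h : ℝⁿ → ℝ be continuously differentiable with gradient ∇h, and let α : ℝ → ℝ be locally Lipschitz, strictly increasing, with α(0) = 0. Let x, x̂ : ℝ → ℝⁿ with x differentiable on [0, ∞), let u : ℝ → ℝᵐ, and suppose for each t ≥ 0 there are f(t) ∈ ℝⁿ and a continuous linear map g(t) : ℝᵐ → ℝⁿ with x'(t) = f(t) + g(t)(u(t)). Let F̂ : ℝⁿ × ℝ_{≥0} → ℝⁿ, Ĝ(z,t) : ℝᵐ → ℝⁿ (continuous linear for each (z,t)), and Δ_F, Δ_G : ℝⁿ × ℝ_{≥0} → ℝ_{≥0}, and define B₁(z,t) := ⟨∇h(z), F̂(z,t)⟩ + α(h(z)) − ‖∇h(z)‖Δ_F(z,t), B₂(z,t) := the adjoint of Ĝ(z,t) applied to ∇h(z), and B₃(z,t) := −‖∇h(z)‖Δ_G(z,t). Suppose for all t ≥ 0: (i) ‖F̂(x(t),t) − f(t)‖ ≤ Δ_F(x(t),t) and the operator norm of Ĝ(x(t),t) − g(t) is at most Δ_G(x(t),t); (ii) ‖x̂(t)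 − x(t)‖ ≤ δ_X(t) for some δ_X(t) ≥ 0; (iii) there is a set S_t containing both x(t) and x̂(t) on which z ↦ B₁(z,t), z ↦ B₂(z,t), and z ↦ B₃(z,t) are Lipschitz with constants L₁(t), L₂(t), L₃(t) ≥ 0, respectively; and (iv) B₁(x̂(t),t) + ⟨B₂(x̂(t),t), u(t)⟩ + B₃(x̂(t),t)‖u(t)‖ ≥ (L₁(t) + L₂(t)‖u(t)‖ + L₃(t)‖u(t)‖)δ_X(t). If h(x(0)) ≥ 0, then h(x(t)) ≥ 0 for all t ≥ 0. -/

import Mathlib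

/-!
Along the trajectory put `w t = h (x t)`, so `w' = ⟪∇h(x), f + g u⟫`. The Lipschitz bounds on
`S t` move the robust condition from the estimate `x̂` to the true state at the price of exactly
`(L₁ + L₂‖u‖ + L₃‖u‖) δX`, so the constraint `B₁ + ⟪B₂, u⟫ + B₃‖u‖` is nonnegative at `x`.
The model error bounds and Cauchy–Schwarz make that constraint a lower bound for
`w' + α w`, hence `w' ≥ -α w > 0` wherever `w < 0`. A function that increases wherever it is
negative cannot become negative: after the last time it is nonnegative it would be increasing
and negative at once.
-/

open Set
open scoped RealInnerProductSpace

theorem HasGradientAt.comp_hasDerivWithinAt {E : Type*} [NormedAddCommGroup E]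
    [InnerProductSpace ℝ E] [CompleteSpace E] {h : E → ℝ} {p : E} {x : ℝ → E} {v : E}
    {s : Set ℝ} {t : ℝ} (hh : HasGradientAt h p (x t)) (hx : HasDerivWithinAt x v s t) :
    HasDerivWithinAt (h ∘ x) ⟪p, v⟫ s t := by
  simpa only [InnerProductSpace.toDual_apply_apply] using
    hh.hasFDerivAt.comp_hasDerivWithinAt t hx

theorem nonneg_of_hasDerivWithinAt_pos_of_neg {w w' : ℝ → ℝ} {a : ℝ}
    (hw : ∀ t ≥ a, HasDerivWithinAt w (w' t) (Ici a) t)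
    (hpos : ∀ t > a, w t < 0 → 0 < w' t) (ha : 0 ≤ w a) :
    ∀ t ≥ a, 0 ≤ w t := by
  intro b hab
  by_contra! hb
  have hcont : ContinuousOn w (Icc a b) := fun t ht =>
    ((hw t ht.1).continuousWithinAt).mono Icc_subset_Ici_self
  have hK : IsCompact (Icc a b ∩ w ⁻¹' Ici 0) :=
    isCompact_Icc.of_isClosed_subset
      (hcont.preimage_isClosed_of_isClosed isClosed_Icc isClosed_Ici) inter_subset_left
  obtain ⟨t₀, ⟨⟨hat₀, ht₀b⟩, hwt₀ : 0 ≤ w t₀⟩, hgreatest⟩ :=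
    hK.exists_isGreatest ⟨a, ⟨left_mem_Icc.2 hab, ha⟩⟩
  have ht₀b : t₀ < b := lt_of_le_of_ne ht₀b (by rintro rfl; exact hb.not_ge hwt₀)
  have hneg : ∀ t ∈ Ioc t₀ b, w t < 0 := fun t ht => by
    by_contra! hwt
    exact ht.1.not_ge (hgreatest ⟨⟨hat₀.trans ht.1.le, ht.2⟩, hwt⟩)
  have hmono : StrictMonoOn w (Icc t₀ b) := by
    refine strictMonoOn_of_hasDerivWithinAt_pos (convex_Icc t₀ b)
      (hcont.mono (Icc_subset_Icc_left hat₀)) (f' := w') (fun t ht => ?_) (fun t ht => ?_)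
    all_goals rw [interior_Icc] at ht
    · have hat : a < t := hat₀.trans_lt ht.1
      exact ((hw t hat.le).hasDerivAt (Ici_mem_nhds hat)).hasDerivWithinAt
    · exact hpos t (hat₀.trans_lt ht.1) (hneg t ⟨ht.1, ht.2.le⟩)
  linarith [hmono (left_mem_Icc.2 ht₀b.le) (right_mem_Icc.2 ht₀b.le) ht₀b]

section InnerProduct

variable {E : Type*} [NormedAddCommGroup E] [InnerProductSpace ℝ E]

theorem real_inner_sub_norm_mul_le (p v w : E) : ⟪p, v⟫ - ‖p‖ * ‖v - w‖ ≤ ⟪p, w⟫ := by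
  have := real_inner_le_norm p (v - w)
  rw [inner_sub_right] at this
  linarith

theorem add_inner_add_mul_norm_sub_le {b₁ b₁' b₃ b₃' ε₁ ε₂ ε₃ : ℝ} {b₂ b₂' u : E}
    (h₁ : |b₁ - b₁'| ≤ ε₁) (h₂ : ‖b₂ - b₂'‖ ≤ ε₂) (h₃ : |b₃ - b₃'| ≤ ε₃) :
    b₁' + ⟪b₂', u⟫ + b₃' * ‖u‖ - (ε₁ + ε₂ * ‖u‖ + ε₃ * ‖u‖) ≤
      b₁ + ⟪b₂, u⟫ + b₃ * ‖u‖ := by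
  have hu := norm_nonneg u
  have hinner : ⟪b₂', u⟫ - ε₂ * ‖u‖ ≤ ⟪b₂, u⟫ := by
    have := real_inner_le_norm (b₂' - b₂) u
    rw [inner_sub_left, norm_sub_rev] at this
    nlinarith
  have h₃' : b₃' * ‖u‖ - ε₃ * ‖u‖ ≤ b₃ * ‖u‖ := by
    nlinarith [(abs_le.1 h₃).1]
  linarith [(abs_le.1 h₁).1]

variable {F : Type*} [NormedAddCommGroup F] [InnerProductSpace ℝ F]
  [CompleteSpace E] [CompleteSpace F]

theorem inner_model_sub_le_inner {p fhat f : E} {Ghat g : F →L[ℝ] E} {u : F} {δF δG : ℝ}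
    (hF : ‖fhat - f‖ ≤ δF) (hG : ‖Ghat - g‖ ≤ δG) :
    ⟪p, fhat⟫ - ‖p‖ * δF + ⟪ContinuousLinearMap.adjoint Ghat p, u⟫ - ‖p‖ * δG * ‖u‖ ≤
      ⟪p, f + g u⟫ := by
  have hGu : ‖Ghat u - g u‖ ≤ δG * ‖u‖ :=
    ((Ghat - g).le_opNorm u).trans (mul_le_mul_of_nonneg_right hG (norm_nonneg u))
  have hp := norm_nonneg p
  rw [ContinuousLinearMap.adjoint_inner_left, inner_add_right]
  nlinarith [real_inner_sub_norm_mul_le p fhat f, real_inner_sub_norm_mul_le p (Ghat u) (g u),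
    mul_le_mul_of_nonneg_left hF hp, mul_le_mul_of_nonneg_left hGu hp]

end InnerProduct

theorem stmt_9_general {n m : ℕ}
    (h : EuclideanSpace ℝ (Fin n) → ℝ) (hh : ContDiff ℝ 1 h)
    (α : ℝ → ℝ) (hmono : StrictMono α) (hα0 : α 0 = 0)
    (x xhat : ℝ → EuclideanSpace ℝ (Fin n)) (u : ℝ → EuclideanSpace ℝ (Fin m))
    (f : ℝ → EuclideanSpace ℝ (Fin n))
    (g : ℝ → EuclideanSpace ℝ (Fin m) →L[ℝ] EuclideanSpace ℝ (Fin n))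
    (hdyn : ∀ t ≥ (0 : ℝ), HasDerivWithinAt x (f t + g t (u t)) (Set.Ici 0) t)
    (Fhat : EuclideanSpace ℝ (Fin n) → ℝ → EuclideanSpace ℝ (Fin n))
    (Ghat : EuclideanSpace ℝ (Fin n) → ℝ →
      (EuclideanSpace ℝ (Fin m) →L[ℝ] EuclideanSpace ℝ (Fin n)))
    (ΔF ΔG : EuclideanSpace ℝ (Fin n) → ℝ → ℝ)
    -- the components of the robust barrier constraint
    (B₁ : EuclideanSpace ℝ (Fin n) → ℝ → ℝ)
    (B₂ : EuclideanSpace ℝ (Fin n) → ℝ → EuclideanSpace ℝ (Fin m))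
    (B₃ : EuclideanSpace ℝ (Fin n) → ℝ → ℝ)
    (hB₁ : ∀ z t, B₁ z t = ⟪gradient h z, Fhat z t⟫ + α (h z) - ‖gradient h z‖ * ΔF z t)
    (hB₂ : ∀ z t, B₂ z t = ContinuousLinearMap.adjoint (Ghat z t) (gradient h z))
    (hB₃ : ∀ z t, B₃ z t = -(‖gradient h z‖ * ΔG z t))
    -- (i) model error bounds along the trajectory
    (herrF : ∀ t ≥ (0 : ℝ), ‖Fhat (x t) t - f t‖ ≤ ΔF (x t) t)
    (herrG : ∀ t ≥ (0 : ℝ), ‖Ghat (x t) t - g t‖ ≤ ΔG (x t) t)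
    -- (ii) state-estimation error bound
    (δX : ℝ → ℝ)
    (hest : ∀ t ≥ (0 : ℝ), ‖xhat t - x t‖ ≤ δX t)
    -- (iii) local Lipschitz bounds on a set containing both the state and its estimate
    (S : ℝ → Set (EuclideanSpace ℝ (Fin n)))
    (hxS : ∀ t ≥ (0 : ℝ), x t ∈ S t) (hxhatS : ∀ t ≥ (0 : ℝ), xhat t ∈ S t)
    (L₁ L₂ L₃ : ℝ → ℝ)
    (hL₁ : ∀ t ≥ (0 : ℝ), 0 ≤ L₁ t) (hL₂ : ∀ t ≥ (0 : ℝ), 0 ≤ L₂ t)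
    (hL₃ : ∀ t ≥ (0 : ℝ), 0 ≤ L₃ t)
    (hLip₁ : ∀ t ≥ (0 : ℝ), ∀ a ∈ S t, ∀ b ∈ S t, |B₁ a t - B₁ b t| ≤ L₁ t * ‖a - b‖)
    (hLip₂ : ∀ t ≥ (0 : ℝ), ∀ a ∈ S t, ∀ b ∈ S t, ‖B₂ a t - B₂ b t‖ ≤ L₂ t * ‖a - b‖)
    (hLip₃ : ∀ t ≥ (0 : ℝ), ∀ a ∈ S t, ∀ b ∈ S t, |B₃ a t - B₃ b t| ≤ L₃ t * ‖a - b‖)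
    -- (iv) the robust output control barrier condition at the estimate
    (hrobust : ∀ t ≥ (0 : ℝ),
      (L₁ t + L₂ t * ‖u t‖ + L₃ t * ‖u t‖) * δX t ≤
        B₁ (xhat t) t + ⟪B₂ (xhat t) t, u t⟫ + B₃ (xhat t) t * ‖u t‖)
    (h0 : 0 ≤ h (x 0)) :
    ∀ t ≥ (0 : ℝ), 0 ≤ h (x t) := by
  have hderiv : ∀ t ≥ (0 : ℝ),
      HasDerivWithinAt (h ∘ x) ⟪gradient h (x t), f t + g t (u t)⟫ (Ici 0) t := fun t ht =>
    (hh.differentiable one_ne_zero (x t)).hasGradientAt.comp_hasDerivWithinAt (hdyn t ht)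
  have hconstraint : ∀ t ≥ (0 : ℝ), 0 ≤ B₁ (x t) t + ⟪B₂ (x t) t, u t⟫ + B₃ (x t) t * ‖u t‖ := by
    intro t ht
    have hdist : ‖x t - xhat t‖ ≤ δX t := norm_sub_rev (x t) (xhat t) ▸ hest t ht
    have hδ {L : ℝ} {e : ℝ} (hL : 0 ≤ L) (he : e ≤ L * ‖x t - xhat t‖) : e ≤ L * δX t :=
      he.trans (mul_le_mul_of_nonneg_left hdist hL)
    have hperturb := add_inner_add_mul_norm_sub_le (u := u t)
      (hδ (hL₁ t ht) (hLip₁ t ht _ (hxS t ht) _ (hxhatS t ht)))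
      (hδ (hL₂ t ht) (hLip₂ t ht _ (hxS t ht) _ (hxhatS t ht)))
      (hδ (hL₃ t ht) (hLip₃ t ht _ (hxS t ht) _ (hxhatS t ht)))
    linarith [hrobust t ht, hperturb]
  refine nonneg_of_hasDerivWithinAt_pos_of_neg hderiv (fun t ht hneg => ?_) h0
  have hαneg : α (h (x t)) < 0 := hα0 ▸ hmono hneg
  have hmodel := inner_model_sub_le_inner (p := gradient h (x t)) (u := u t)
    (herrF t ht.le) (herrG t ht.le)
  have hB := hconstraint t ht.le
  rw [hB₁, hB₂, hB₃] at hB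
  linarith

/-- Invariance claim of Theorem 1 along a trajectory: the zero-superlevel set of
the barrier function `h` is forward invariant under the robust output control
barrier function condition evaluated at the state estimate `x̂`. -/
theorem stmt_9 {n m : ℕ}
    (h : EuclideanSpace ℝ (Fin n) → ℝ) (hh : ContDiff ℝ 1 h)
    (α : ℝ → ℝ) (hα : LocallyLipschitz α) (hmono : StrictMono α) (hα0 : α 0 = 0)
    (x xhat : ℝ → EuclideanSpace ℝ (Fin n)) (u : ℝ → EuclideanSpace ℝ (Fin m))
    (f : ℝ → EuclideanSpace ℝ (Fin n))
    (g : ℝ → EuclideanSpace ℝ (Fin m) →L[ℝ] EuclideanSpace ℝ (Fin n))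
    (hdyn : ∀ t ≥ (0 : ℝ), HasDerivWithinAt x (f t + g t (u t)) (Set.Ici 0) t)
    (Fhat : EuclideanSpace ℝ (Fin n) → ℝ → EuclideanSpace ℝ (Fin n))
    (Ghat : EuclideanSpace ℝ (Fin n) → ℝ →
      (EuclideanSpace ℝ (Fin m) →L[ℝ] EuclideanSpace ℝ (Fin n)))
    (ΔF ΔG : EuclideanSpace ℝ (Fin n) → ℝ → ℝ)
    (hΔF : ∀ z, ∀ t ≥ (0 : ℝ), 0 ≤ ΔF z t) (hΔG : ∀ z, ∀ t ≥ (0 : ℝ), 0 ≤ ΔG z t)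
    -- the components of the robust barrier constraint
    (B₁ : EuclideanSpace ℝ (Fin n) → ℝ → ℝ)
    (B₂ : EuclideanSpace ℝ (Fin n) → ℝ → EuclideanSpace ℝ (Fin m))
    (B₃ : EuclideanSpace ℝ (Fin n) → ℝ → ℝ)
    (hB₁ : ∀ z t, B₁ z t = ⟪gradient h z, Fhat z t⟫ + α (h z) - ‖gradient h z‖ * ΔF z t)
    (hB₂ : ∀ z t, B₂ z t = ContinuousLinearMap.adjoint (Ghat z t) (gradient h z))
    (hB₃ : ∀ z t, B₃ z t = -(‖gradient h z‖ * ΔG z t))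
    -- (i) model error bounds along the trajectory
    (herrF : ∀ t ≥ (0 : ℝ), ‖Fhat (x t) t - f t‖ ≤ ΔF (x t) t)
    (herrG : ∀ t ≥ (0 : ℝ), ‖Ghat (x t) t - g t‖ ≤ ΔG (x t) t)
    -- (ii) state-estimation error bound
    (δX : ℝ → ℝ) (hδX : ∀ t ≥ (0 : ℝ), 0 ≤ δX t)
    (hest : ∀ t ≥ (0 : ℝ), ‖xhat t - x t‖ ≤ δX t)
    -- (iii) local Lipschitz bounds on a set containing both the state and its estimate
    (S : ℝ → Set (EuclideanSpace ℝ (Fin n)))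
    (hxS : ∀ t ≥ (0 : ℝ), x t ∈ S t) (hxhatS : ∀ t ≥ (0 : ℝ), xhat t ∈ S t)
    (L₁ L₂ L₃ : ℝ → ℝ)
    (hL₁ : ∀ t ≥ (0 : ℝ), 0 ≤ L₁ t) (hL₂ : ∀ t ≥ (0 : ℝ), 0 ≤ L₂ t)
    (hL₃ : ∀ t ≥ (0 : ℝ), 0 ≤ L₃ t)
    (hLip₁ : ∀ t ≥ (0 : ℝ), ∀ a ∈ S t, ∀ b ∈ S t, |B₁ a t - B₁ b t| ≤ L₁ t * ‖a - b‖)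
    (hLip₂ : ∀ t ≥ (0 : ℝ), ∀ a ∈ S t, ∀ b ∈ S t, ‖B₂ a t - B₂ b t‖ ≤ L₂ t * ‖a - b‖)
    (hLip₃ : ∀ t ≥ (0 : ℝ), ∀ a ∈ S t, ∀ b ∈ S t, |B₃ a t - B₃ b t| ≤ L₃ t * ‖a - b‖)
    -- (iv) the robust output control barrier condition at the estimate
    (hrobust : ∀ t ≥ (0 : ℝ),
      (L₁ t + L₂ t * ‖u t‖ + L₃ t * ‖u t‖) * δX t ≤
        B₁ (xhat t) t + ⟪B₂ (xhat t) t, u t⟫ + B₃ (xhat t) t * ‖u t‖)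
    (h0 : 0 ≤ h (x 0)) :
    ∀ t ≥ (0 : ℝ), 0 ≤ h (x t) :=
  stmt_9_general h hh α hmono hα0 x xhat u f g hdyn Fhat Ghat ΔF ΔG B₁ B₂ B₃ hB₁ hB₂ hB₃ herrF herrG
    δX hest S hxS hxhatS L₁ L₂ L₃ hL₁ hL₂ hL₃ hLip₁ hLip₂ hLip₃ hrobust h0
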